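/- Assume γ > 1 and a > 0. Then the 3×3 real matrix A_p^ZB satisfies A_p^ZB·R₁ = (−√((γ−1)/γ)·a)·R₁, A_p^ZB·R₂ = 0, and A_p^ZB·R₃ = (√((γ−1)/γ)·a)·R₃, where R₁ = (0, 1, u − a/√(γ(γ−1)))ᵀ, R₂ = (1, u, u²/2)ᵀ, R₃ = (0, 1, u + a/√(γ(γ−1)))ᵀ; the three eigenvalues −√((γ−1)/γ)·a, 0, √((γ−1)/γ)·a are pairwise distinct, so R₁, R₂, R₃ are linearly independent and the pressure subsystem is strictly hyperbolic. -/

import Mathlib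

/-- The Zha–Bilgen pressure flux Jacobian of the 1-D Euler system. -/
noncomputable def ApZB (u a γ : ℝ) : Matrix (Fin 3) (Fin 3) ℝ :=
  !![0, 0, 0;
     (γ-1)*u^2/2, -(γ-1)*u, γ-1;
     -a^2*u/γ + (γ-1)*u^3/2, a^2/γ - (γ-1)*u^2, (γ-1)*u]

/-- For `γ > 1`, `a > 0`, the matrix `A_p^ZB` has eigenvectors `R₁, R₂, R₃` with pairwise
distinct eigenvalues `−√((γ−1)/γ)·a, 0, √((γ−1)/γ)·a`; hence `R₁, R₂, R₃` are linearly
independent and the pressure subsystem is strictly hyperbolic. -/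
theorem eigenvectors_ApZB (u a γ : ℝ) (hγ : 1 < γ) (ha : 0 < a) :
    let R₁ : Fin 3 → ℝ := ![0, 1, u - a / Real.sqrt (γ*(γ-1))]
    let R₂ : Fin 3 → ℝ := ![1, u, u^2/2]
    let R₃ : Fin 3 → ℝ := ![0, 1, u + a / Real.sqrt (γ*(γ-1))]
    (ApZB u a γ).mulVec R₁ = (-(Real.sqrt ((γ-1)/γ) * a)) • R₁ ∧
    (ApZB u a γ).mulVec R₂ = 0 ∧
    (ApZB u a γ).mulVec R₃ = (Real.sqrt ((γ-1)/γ) * a) • R₃ ∧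
    (-(Real.sqrt ((γ-1)/γ) * a) ≠ 0 ∧ Real.sqrt ((γ-1)/γ) * a ≠ 0 ∧
      -(Real.sqrt ((γ-1)/γ) * a) ≠ Real.sqrt ((γ-1)/γ) * a) ∧
    LinearIndependent ℝ ![R₁, R₂, R₃] := by
  intro R₁ R₂ R₃
  have hγ0 : (0:ℝ) < γ := by linarith
  have hγ1 : (0:ℝ) < γ - 1 := by linarith
  set t := Real.sqrt (γ*(γ-1)) with htdef
  have ht : 0 < t := Real.sqrt_pos.2 (by positivity)
  have ht2 : t^2 = γ*(γ-1) := Real.sq_sqrt (by positivity)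
  have hs : Real.sqrt ((γ-1)/γ) = t/γ := by
    rw [show (γ-1)/γ = (t/γ)^2 by rw [div_pow, ht2]; field_simp]
    exact Real.sqrt_sq (by positivity)
  have hmul : Real.sqrt γ * Real.sqrt (-1+γ) = t := by
    rw [htdef, show γ*(γ-1) = γ*(-1+γ) by ring, Real.sqrt_mul hγ0.le]
  have hmul2 : Real.sqrt γ * Real.sqrt (γ-1) = t := by
    rw [htdef, Real.sqrt_mul hγ0.le]
  have hγ0' := hγ0.ne'
  have ht' := ht.ne'
  refine ⟨?_, ?_, ?_, ⟨?_, ?_, ?_⟩, ?_⟩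
  · funext i
    fin_cases i <;>
      simp [ApZB, Matrix.mulVec, dotProduct, R₁, Fin.sum_univ_three, hs] <;>
      field_simp <;> rw [← htdef]
    · linear_combination a * ht2
    · linear_combination (a*u) * ht2
  · funext i
    fin_cases i <;>
      simp [ApZB, Matrix.mulVec, dotProduct, R₂, Fin.sum_univ_three] <;> ring
  · funext i
    fin_cases i <;>
      simp [ApZB, Matrix.mulVec, dotProduct, R₃, Fin.sum_univ_three, hs] <;>
      field_simp <;> rw [← htdef]
    · linear_combination (-a) * ht2
    · linear_combination (-(a*u)) * ht2
  · rw [hs]; exact neg_ne_zero.2 (by positivity)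
  · rw [hs]; positivity
  · rw [hs]
    intro h
    have hx : 0 < t/γ*a := by positivity
    linarith
  · have key : LinearIndependent ℝ (fun i => (Matrix.of ![R₁, R₂, R₃]) i) := by
      change LinearIndependent ℝ (Matrix.of ![R₁, R₂, R₃]).row
      rw [Matrix.linearIndependent_rows_iff_isUnit, Matrix.isUnit_iff_isUnit_det]
      have hdet : (Matrix.of ![R₁, R₂, R₃]).det = -(2*a/t) := by
        simp [Matrix.det_fin_three, R₁, R₂, R₃]
        field_simp
        linear_combination
      rw [hdet]
      exact isUnit_iff_ne_zero.2 (neg_ne_zero.2 (by positivity))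
    exact key
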